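/- Let Ω ⊆ ℂⁿ be a bounded open set, let φ : Ω → Ω be holomorphic, and suppose the composition operator C_φ is compact on the Bergman space A²(Ω). Let (h_j) be a sequence of holomorphic functions h_j : Ω → ℂ with ∫_Ω |h_j|² dV ≤ 1 for all j and with h_j → 0 uniformly on every compact subset of Ω. Let (p_j) be a sequence of points of Ω and (r_j) a sequence of positive reals such that the closed Euclidean ball of center p_j and radius r_j is contained in Ω for every j. Then |h_j(φ(p_j))| · (V(B(p_j, r_j)))^{1/2} → 0 as j → ∞, where B(p_j, r_j) is the open Euclidean ball of center p_j and radius r_j. -/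

import Mathlib

open MeasureTheory Metric Filter ENNReal NNReal

noncomputable section

/-- Borel measurable structure on `ℂⁿ` (with the Euclidean norm). -/
instance (n : ℕ) : MeasurableSpace (EuclideanSpace ℂ (Fin n)) := borel _

instance (n : ℕ) : BorelSpace (EuclideanSpace ℂ (Fin n)) := ⟨rfl⟩

/-- The composition operator `C_φ : f ↦ f ∘ φ` is compact on the Bergman space `A²(Ω)`:
every sequence of holomorphic functions on `Ω` lying in the closed unit ball of `A²(Ω)`
has a subsequence whose image under `C_φ` converges in `L²(Ω, V)`. -/
def IsCompactCompositionOperator {n : ℕ} (Ω : Set (EuclideanSpace ℂ (Fin n)))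
    (φ : EuclideanSpace ℂ (Fin n) → EuclideanSpace ℂ (Fin n)) : Prop :=
  ∀ g : ℕ → EuclideanSpace ℂ (Fin n) → ℂ,
    (∀ j, DifferentiableOn ℂ (g j) Ω) →
    (∀ j, ∫⁻ z in Ω, (‖g j z‖₊ : ℝ≥0∞) ^ 2 ∂volume ≤ 1) →
    ∃ k : ℕ → ℕ, StrictMono k ∧
      ∃ h : EuclideanSpace ℂ (Fin n) → ℂ, Measurable h ∧
        Tendsto (fun i => ∫⁻ z in Ω, (‖g (k i) (φ z) - h z‖₊ : ℝ≥0∞) ^ 2 ∂volume)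
          atTop (nhds 0)

/-- `F` parametrizes a nondegenerate (nonconstant) analytic disk contained in `∂Ω`. -/
def IsNondegenAnalyticDiskIn {n : ℕ} (Ω : Set (EuclideanSpace ℂ (Fin n)))
    (F : ℂ → EuclideanSpace ℂ (Fin n)) : Prop :=
  DifferentiableOn ℂ F (ball 0 1) ∧
    (∃ a ∈ ball (0 : ℂ) 1, ∃ b ∈ ball (0 : ℂ) 1, F a ≠ F b) ∧
    F '' ball 0 1 ⊆ frontier Ω

/-- `𝓛`: the union of all nondegenerate analytic disks contained in `∂Ω`. -/
def analyticDiskUnion {n : ℕ} (Ω : Set (EuclideanSpace ℂ (Fin n))) :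
    Set (EuclideanSpace ℂ (Fin n)) :=
  {z | ∃ F : ℂ → EuclideanSpace ℂ (Fin n),
    IsNondegenAnalyticDiskIn Ω F ∧ z ∈ F '' ball 0 1}

/-- `Ω` satisfies the limit point disk condition: every point of the closure of `𝓛`
lies in the closure of some nondegenerate analytic disk in `∂Ω`. -/
def LimitPointDiskCondition {n : ℕ} (Ω : Set (EuclideanSpace ℂ (Fin n))) : Prop :=
  ∀ p ∈ closure (analyticDiskUnion Ω),
    ∃ F : ℂ → EuclideanSpace ℂ (Fin n),
      IsNondegenAnalyticDiskIn Ω F ∧ p ∈ closure (F '' ball 0 1)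

/-!
Compactness of `C_φ` and the pointwise convergence `h_j ∘ φ → 0` force `‖h_j ∘ φ‖_{L²(Ω)} → 0`:
along a subsequence `h_j ∘ φ` converges in `L²` to some `g`, and Fatou's lemma shows `g = 0`
almost everywhere.

On the other hand `|g(p)|² V(B(p,r)) ≤ ∫_{B(p,r)} |g|²` for every `g` holomorphic on the ball.
For each `x` in the ball, the mean value property on the complex disc `λ ↦ p + λ (x - p)` and
Cauchy–Schwarz give `2π |g(p)|² ≤ ∫₀^{2π} |g(p + e^{iθ} (x - p))|² dθ`; integrating over `x` and
using that the ball and Lebesgue measure are invariant under `x ↦ p + e^{iθ} (x - p)` gives the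
inequality. Applied to `g = h_j ∘ φ` it bounds the square of the quantity in question by
`‖h_j ∘ φ‖²_{L²(Ω)}`.
-/

open Real Set Function

theorem ENNReal.sq_lintegral_le_measure_univ_mul {α : Type*} [MeasurableSpace α] {μ : Measure α}
    {f : α → ℝ≥0∞} (hf : AEMeasurable f μ) :
    (∫⁻ a, f a ∂μ) ^ 2 ≤ μ univ * ∫⁻ a, f a ^ 2 ∂μ := by
  have holder := ENNReal.lintegral_mul_le_Lp_mul_Lq μ Real.HolderConjugate.two_two hf
    aemeasurable_const (g := fun _ => 1)
  simp only [Pi.mul_apply, mul_one, rpow_two, one_pow, lintegral_one] at holder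
  calc (∫⁻ a, f a ∂μ) ^ 2
      ≤ ((∫⁻ a, f a ^ 2 ∂μ) ^ (1 / 2 : ℝ) * μ univ ^ (1 / 2 : ℝ)) ^ 2 := by gcongr
    _ = μ univ * ∫⁻ a, f a ^ 2 ∂μ := by
      rw [mul_pow, ← rpow_natCast, ← rpow_natCast (_ ^ _), ← rpow_mul, ← rpow_mul]
      norm_num [mul_comm]

section MeanValue

variable {F : Type*} [NormedAddCommGroup F] [NormedSpace ℂ F] [CompleteSpace F]

theorem ofReal_two_pi_mul_enorm_sq_le_lintegral_circleMap {f : ℂ → F} {c : ℂ} {R : ℝ}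
    (hf : DifferentiableOn ℂ f (closedBall c |R|)) :
    ENNReal.ofReal (2 * π) * ‖f c‖ₑ ^ 2 ≤
      ∫⁻ θ in Ioc 0 (2 * π), ‖f (circleMap c R θ)‖ₑ ^ 2 := by
  have h2π : 0 < 2 * π := by positivity
  have hL : ENNReal.ofReal (2 * π) ≠ 0 := by simpa using h2π
  have hint : ∫ θ in Ioc 0 (2 * π), f (circleMap c R θ) = (2 * π) • f c := by
    rw [← (hf.diffContOnCl_ball subset_rfl).circleAverage, circleAverage_def,
      smul_inv_smul₀ h2π.ne', intervalIntegral.integral_of_le h2π.le]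
  have hmeas : AEMeasurable (fun θ => ‖f (circleMap c R θ)‖ₑ) (volume.restrict (Ioc 0 (2 * π))) :=
    (hf.continuousOn.mono sphere_subset_closedBall).circleIntegrable'.1.aestronglyMeasurable.enorm
  have hmean : ENNReal.ofReal (2 * π) * ‖f c‖ₑ ≤ ∫⁻ θ in Ioc 0 (2 * π), ‖f (circleMap c R θ)‖ₑ :=
    calc ENNReal.ofReal (2 * π) * ‖f c‖ₑ = ‖∫ θ in Ioc 0 (2 * π), f (circleMap c R θ)‖ₑ := by
          rw [hint, enorm_smul, Real.enorm_eq_ofReal h2π.le]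
      _ ≤ _ := enorm_integral_le_lintegral_enorm _
  refine (ENNReal.mul_le_mul_iff_right hL ofReal_ne_top).mp ?_
  calc ENNReal.ofReal (2 * π) * (ENNReal.ofReal (2 * π) * ‖f c‖ₑ ^ 2)
      = (ENNReal.ofReal (2 * π) * ‖f c‖ₑ) ^ 2 := by ring
    _ ≤ (∫⁻ θ in Ioc 0 (2 * π), ‖f (circleMap c R θ)‖ₑ) ^ 2 := by gcongr
    _ ≤ _ := by
      simpa using ENNReal.sq_lintegral_le_measure_univ_mul hmeas

variable {E : Type*} [NormedAddCommGroup E] [NormedSpace ℂ E] [MeasurableSpace E] [BorelSpace E]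
  {μ : Measure E} [SFinite μ]

theorem enorm_sq_mul_measure_ball_zero_le_lintegral
    (hμ : ∀ c : ℂ, ‖c‖ = 1 → MeasurePreserving (c • · : E → E) μ μ)
    {g : E → F} {r : ℝ} (hg : DifferentiableOn ℂ g (ball 0 r)) :
    ‖g 0‖ₑ ^ 2 * μ (ball 0 r) ≤ ∫⁻ x in ball 0 r, ‖g x‖ₑ ^ 2 ∂μ := by
  set B := ball (0 : E) r
  set I := Ioc (0 : ℝ) (2 * π)
  have hL : ENNReal.ofReal (2 * π) ≠ 0 := by simpa using two_pi_pos
  have hrot_mem : ∀ θ x, circleMap 0 1 θ • x ∈ B ↔ x ∈ B := by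
    simp [B, norm_smul]
  have hcircle : ∀ x ∈ B, ENNReal.ofReal (2 * π) * ‖g 0‖ₑ ^ 2 ≤
      ∫⁻ θ in I, ‖g (circleMap 0 1 θ • x)‖ₑ ^ 2 := by
    intro x hx
    have hdisk : DifferentiableOn ℂ (fun z : ℂ => g (z • x)) (closedBall 0 |1|) := by
      refine hg.comp (differentiableOn_id.smul_const x) fun z hz => ?_
      rw [abs_one, mem_closedBall_zero_iff] at hz
      rw [mem_ball_zero_iff, norm_smul]
      exact (mul_le_of_le_one_left (norm_nonneg x) hz).trans_lt (mem_ball_zero_iff.1 hx)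
    simpa using ofReal_two_pi_mul_enorm_sq_le_lintegral_circleMap hdisk
  have hmeas : AEMeasurable (uncurry fun x θ => ‖g (circleMap 0 1 θ • x)‖ₑ ^ 2)
      ((μ.restrict B).prod (volume.restrict I)) := by
    rw [Measure.prod_restrict]
    refine ContinuousOn.aemeasurable ?_ (measurableSet_ball.prod measurableSet_Ioc)
    have : ContinuousOn (fun q : E × ℝ => g (circleMap 0 1 q.2 • q.1)) (B ×ˢ I) :=
      hg.continuousOn.comp (by fun_prop) fun q hq => (hrot_mem _ _).2 hq.1
    exact (ENNReal.continuous_pow 2).comp_continuousOn this.enorm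
  have hrot : ∀ θ, ∫⁻ x in B, ‖g (circleMap 0 1 θ • x)‖ₑ ^ 2 ∂μ = ∫⁻ x in B, ‖g x‖ₑ ^ 2 ∂μ := by
    intro θ
    have hc : ‖circleMap 0 1 θ‖ = 1 := by simp
    have hpre : (circleMap 0 1 θ • · : E → E) ⁻¹' B = B := Set.ext (hrot_mem θ)
    conv_lhs => rw [← hpre]
    exact (hμ _ hc).setLIntegral_comp_preimage_emb
      (measurableEmbedding_const_smul₀ (norm_ne_zero_iff.1 (hc.trans_ne one_ne_zero)))
      (fun x => ‖g x‖ₑ ^ 2) B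
  refine (ENNReal.mul_le_mul_iff_right hL ofReal_ne_top).mp ?_
  calc ENNReal.ofReal (2 * π) * (‖g 0‖ₑ ^ 2 * μ B)
      = ∫⁻ _ in B, ENNReal.ofReal (2 * π) * ‖g 0‖ₑ ^ 2 ∂μ := by
        rw [setLIntegral_const, mul_assoc]
    _ ≤ ∫⁻ x in B, (∫⁻ θ in I, ‖g (circleMap 0 1 θ • x)‖ₑ ^ 2) ∂μ :=
        setLIntegral_mono' measurableSet_ball hcircle
    _ = ∫⁻ θ in I, (∫⁻ x in B, ‖g (circleMap 0 1 θ • x)‖ₑ ^ 2 ∂μ) :=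
        lintegral_lintegral_swap hmeas
    _ = ENNReal.ofReal (2 * π) * ∫⁻ x in B, ‖g x‖ₑ ^ 2 ∂μ := by
        simp_rw [hrot]
        rw [setLIntegral_const, Real.volume_Ioc, sub_zero, mul_comm]

theorem enorm_sq_mul_measure_ball_le_lintegral [μ.IsAddLeftInvariant]
    (hμ : ∀ c : ℂ, ‖c‖ = 1 → MeasurePreserving (c • · : E → E) μ μ)
    {g : E → F} {p : E} {r : ℝ} (hg : DifferentiableOn ℂ g (ball p r)) :
    ‖g p‖ₑ ^ 2 * μ (ball p r) ≤ ∫⁻ z in ball p r, ‖g z‖ₑ ^ 2 ∂μ := by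
  have hpre : (p + ·) ⁻¹' ball p r = ball (0 : E) r := by
    ext x
    simp
  have hg0 : DifferentiableOn ℂ (fun x => g (p + x)) (ball 0 r) :=
    hg.comp (differentiableOn_id.const_add p) (hpre ▸ mapsTo_preimage _ _)
  have := enorm_sq_mul_measure_ball_zero_le_lintegral hμ hg0
  rwa [add_zero, ← hpre, measure_preimage_add,
    (measurePreserving_add_left μ p).setLIntegral_comp_preimage_emb
      (measurableEmbedding_addLeft p) (fun z => ‖g z‖ₑ ^ 2)] at this

end MeanValue

theorem measurePreserving_smul_of_norm_eq_one {V : Type*} [NormedAddCommGroup V]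
    [InnerProductSpace ℝ V] [FiniteDimensional ℝ V] [NormedSpace ℂ V] [IsScalarTower ℝ ℂ V]
    [MeasurableSpace V] [BorelSpace V] {c : ℂ} (hc : ‖c‖ = 1) :
    MeasurePreserving (c • · : V → V) := by
  have hc0 : c ≠ 0 := norm_ne_zero_iff.1 (hc.trans_ne one_ne_zero)
  let rot : V ≃ₗᵢ[ℝ] V :=
    { (LinearEquiv.smulOfNeZero ℂ V c hc0).restrictScalars ℝ with
      norm_map' := fun x => by simp [norm_smul, hc] }
  exact rot.measurePreserving

theorem tendsto_lintegral_enorm_sq_of_ae_tendsto_zero {α G : Type*} [MeasurableSpace α]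
    [NormedAddCommGroup G] {μ : Measure α} {f : ℕ → α → G} {g : α → G}
    (hf : ∀ i, AEStronglyMeasurable (f i) μ) (hg : AEStronglyMeasurable g μ)
    (hlim : ∀ᵐ a ∂μ, Tendsto (fun i => f i a) atTop (nhds 0))
    (hL2 : Tendsto (fun i => ∫⁻ a, ‖f i a - g a‖ₑ ^ 2 ∂μ) atTop (nhds 0)) :
    Tendsto (fun i => ∫⁻ a, ‖f i a‖ₑ ^ 2 ∂μ) atTop (nhds 0) := by
  have hfatou : ∫⁻ a, ‖g a‖ₑ ^ 2 ∂μ = 0 := by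
    refine nonpos_iff_eq_zero.1 ?_
    calc ∫⁻ a, ‖g a‖ₑ ^ 2 ∂μ = ∫⁻ a, liminf (fun i => ‖f i a - g a‖ₑ ^ 2) atTop ∂μ := by
          refine lintegral_congr_ae (hlim.mono fun a ha => ?_)
          have := (((ENNReal.continuous_pow 2).tendsto _).comp (ha.sub_const (g a)).enorm).liminf_eq
          rwa [zero_sub, enorm_neg, eq_comm] at this
      _ ≤ liminf (fun i => ∫⁻ a, ‖f i a - g a‖ₑ ^ 2 ∂μ) atTop :=
          lintegral_liminf_le' fun i => ((hf i).sub hg).enorm.pow_const 2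
      _ = 0 := hL2.liminf_eq
  have hg0 : g =ᵐ[μ] 0 := by
    filter_upwards [(lintegral_eq_zero_iff' (hg.enorm.pow_const 2)).1 hfatou] with a ha
    simpa using ha
  refine hL2.congr fun i => lintegral_congr_ae ?_
  filter_upwards [hg0] with a ha
  simp [ha]

theorem IsCompactCompositionOperator.tendsto_lintegral_comp {n : ℕ}
    {Ω : Set (EuclideanSpace ℂ (Fin n))} {φ : EuclideanSpace ℂ (Fin n) → EuclideanSpace ℂ (Fin n)}
    (hcompact : IsCompactCompositionOperator Ω φ) (hΩ : MeasurableSet Ω)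
    (hmaps : MapsTo φ Ω Ω) (hφ : ContinuousOn φ Ω) {h : ℕ → EuclideanSpace ℂ (Fin n) → ℂ}
    (hholo : ∀ j, DifferentiableOn ℂ (h j) Ω)
    (hbdd : ∀ j, ∫⁻ z in Ω, (‖h j z‖₊ : ℝ≥0∞) ^ 2 ∂volume ≤ 1)
    (hpt : ∀ z ∈ Ω, Tendsto (fun j => h j (φ z)) atTop (nhds 0)) :
    Tendsto (fun j => ∫⁻ z in Ω, ‖h j (φ z)‖ₑ ^ 2) atTop (nhds 0) := by
  refine tendsto_of_subseq_tendsto fun ns hns => ?_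
  obtain ⟨k, hk, g, hg, hL2⟩ := hcompact (fun i => h (ns i)) (fun i => hholo _) (fun i => hbdd _)
  refine ⟨k, tendsto_lintegral_enorm_sq_of_ae_tendsto_zero (fun i => ?_) hg.aestronglyMeasurable
    ?_ hL2⟩
  · exact ((hholo _).continuousOn.comp hφ hmaps).aestronglyMeasurable hΩ
  · filter_upwards [ae_restrict_mem hΩ] with z hz
    exact (hpt z hz).comp (hns.comp hk.tendsto_atTop)

theorem stmt_8_general {n : ℕ} (Ω : Set (EuclideanSpace ℂ (Fin n)))
    (hopen : IsOpen Ω)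
    (φ : EuclideanSpace ℂ (Fin n) → EuclideanSpace ℂ (Fin n))
    (hmaps : Set.MapsTo φ Ω Ω)
    (hφholo : DifferentiableOn ℂ φ Ω)
    (hcompact : IsCompactCompositionOperator Ω φ)
    (h : ℕ → EuclideanSpace ℂ (Fin n) → ℂ)
    (hhholo : ∀ j, DifferentiableOn ℂ (h j) Ω)
    (hhbdd : ∀ j, ∫⁻ z in Ω, (‖h j z‖₊ : ℝ≥0∞) ^ 2 ∂volume ≤ 1)
    (hhunif : ∀ K ⊆ Ω, IsCompact K → TendstoUniformlyOn h 0 atTop K)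
    (p : ℕ → EuclideanSpace ℂ (Fin n)) (r : ℕ → ℝ)
    (hball : ∀ j, closedBall (p j) (r j) ⊆ Ω) :
    Tendsto (fun j => ‖h j (φ (p j))‖ * Real.sqrt ((volume (ball (p j) (r j))).toReal))
      atTop (nhds 0) := by
  have hpt : ∀ z ∈ Ω, Tendsto (fun j => h j (φ z)) atTop (nhds 0) := fun z hz => by
    simpa using (hhunif {φ z} (by simpa using hmaps hz) isCompact_singleton).tendsto_at rfl
  have hL2 := hcompact.tendsto_lintegral_comp hopen.measurableSet hmaps hφholo.continuousOn
    hhholo hhbdd hpt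
  have hbound : ∀ j, ‖h j (φ (p j))‖ₑ ^ 2 * volume (ball (p j) (r j)) ≤
      ∫⁻ z in Ω, ‖h j (φ z)‖ₑ ^ 2 := fun j =>
    have hsub : ball (p j) (r j) ⊆ Ω := ball_subset_closedBall.trans (hball j)
    (enorm_sq_mul_measure_ball_le_lintegral
      (fun _ hc => measurePreserving_smul_of_norm_eq_one hc)
      (((hhholo j).comp hφholo hmaps).mono hsub)).trans (lintegral_mono_set hsub)
  have hlim := tendsto_of_tendsto_of_tendsto_of_le_of_le tendsto_const_nhds hL2
    (fun _ => zero_le) hbound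
  have := ((ENNReal.tendsto_toReal zero_ne_top).comp hlim).sqrt
  simpa [Real.sqrt_mul (sq_nonneg _)] using this

/-- If `C_φ` is compact on `A²(Ω)` and `(h_j)` is a sequence in the closed unit ball of
`A²(Ω)` tending to `0` uniformly on compact subsets, then for any points `p_j ∈ Ω` and radii
`r_j > 0` with `closedBall p_j r_j ⊆ Ω`, we have `|h_j(φ(p_j))| · V(B(p_j,r_j))^{1/2} → 0`. -/
theorem stmt_8 {n : ℕ} (Ω : Set (EuclideanSpace ℂ (Fin n)))
    (hopen : IsOpen Ω) (hbdd : Bornology.IsBounded Ω)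
    (φ : EuclideanSpace ℂ (Fin n) → EuclideanSpace ℂ (Fin n))
    (hmaps : Set.MapsTo φ Ω Ω)
    (hφholo : DifferentiableOn ℂ φ Ω)
    (hcompact : IsCompactCompositionOperator Ω φ)
    (h : ℕ → EuclideanSpace ℂ (Fin n) → ℂ)
    (hhholo : ∀ j, DifferentiableOn ℂ (h j) Ω)
    (hhbdd : ∀ j, ∫⁻ z in Ω, (‖h j z‖₊ : ℝ≥0∞) ^ 2 ∂volume ≤ 1)
    (hhunif : ∀ K ⊆ Ω, IsCompact K → TendstoUniformlyOn h 0 atTop K)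
    (p : ℕ → EuclideanSpace ℂ (Fin n)) (r : ℕ → ℝ) (hr : ∀ j, 0 < r j)
    (hball : ∀ j, closedBall (p j) (r j) ⊆ Ω) :
    Tendsto (fun j => ‖h j (φ (p j))‖ * Real.sqrt ((volume (ball (p j) (r j))).toReal))
      atTop (nhds 0) :=
  stmt_8_general Ω hopen φ hmaps hφholo hcompact h hhholo hhbdd hhunif p r hball
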